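/- Let (Δ_n)_{n≥0} be a sequence of K-linear endomorphisms of a commutative unital K-algebra A with Δ_n(1)=0, and let Δ : A[[t]] → A[[t]] be the associated K[[t]]-linear map Δ(Σ_m t^m a_m) = Σ_{n,m} t^{n+m} Δ_n(a_m). Then K(Δ)_n(a_1,…,a_n) ∈ t^{n−1}·A[[t]] for every n ≥ 2 and all a_1,…,a_n ∈ A if and only if K(Δ_m)_{m+2} = 0 identically for every m ≥ 0 (i.e. each Δ_m is a differential operator of order ≤ m+1). -/

import Mathlib

/-!
Writing `[D, b]` for the commutator `x ↦ D (b x) - b D x`, the Koszul bracket is an iterated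
commutator evaluated at `1`: `K(D)_n(a_1, …, a_n) = [[D, a_1], …, a_n](1)` once `D 1 = 0`
(and `D 1 = 0` itself follows from the vanishing of any `K(D)_n`, since `[D, 1] = 0`). If
`K(D)_{k+1} = 0`, every `k`-fold commutator `E` of `D` satisfies `E x = x E(1)`, so it commutes
with all multiplications, and all longer brackets vanish.

The `t^p`-coefficient of `K(Δ)_n(a_1, …, a_n)` for constant series `a_i` is `K(Δ_p)_n(a_1, …, a_n)`,
so `t^{n-1}` divides it iff `K(Δ_p)_n = 0` for `p ≤ n - 2`; by the previous paragraph this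
holds for all `n ≥ 2` iff `K(Δ_m)_{m+2} = 0` for all `m`.
-/

open Finset

/-- The `n`-th Koszul bracket of an operator `D` on a commutative ring. -/
noncomputable def koszul {R : Type*} [CommRing R] (D : R → R) (n : ℕ) (a : Fin n → R) : R :=
  ∑ s ∈ (Finset.univ : Finset (Fin n)).powerset.filter fun s => s.Nonempty,
    (-1 : ℤ) ^ (n - s.card) • (D (∏ i ∈ s, a i) * ∏ i ∈ sᶜ, a i)

/-- The `K[[t]]`-linear operator on `A[[t]]` associated with a sequence of operators:
`Δ(Σ_m t^m a_m) = Σ_{n,m} t^{n+m} Δ_n(a_m)`. -/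
noncomputable def assocMap {A B : Type*} [CommRing A] [CommRing B] (D : ℕ → A → B) :
    PowerSeries A → PowerSeries B :=
  fun F => PowerSeries.mk fun p =>
    ∑ j ∈ Finset.range (p + 1), D j (PowerSeries.coeff (p - j) F)

section Commutator

variable {R : Type*} [CommRing R]

def commutatorMul (D : R → R) (b : R) : R → R := fun x => D (b * x) - b * D x

def iteratedCommutatorMul (D : R → R) (l : List R) : R → R := l.foldl commutatorMul D

lemma iteratedCommutatorMul_cons (D : R → R) (b : R) (l : List R) :
    iteratedCommutatorMul D (b :: l) = iteratedCommutatorMul (commutatorMul D b) l := rfl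

lemma iteratedCommutatorMul_append (D : R → R) (l₁ l₂ : List R) :
    iteratedCommutatorMul D (l₁ ++ l₂) =
      iteratedCommutatorMul (iteratedCommutatorMul D l₁) l₂ :=
  List.foldl_append

lemma commutatorMul_one (D : R → R) : commutatorMul D 1 = 0 := by
  funext x
  simp [commutatorMul]

lemma commutatorMul_eq_zero_of_map_eq_mul {D : R → R} (hD : ∀ x, D x = x * D 1) (b : R) :
    commutatorMul D b = 0 := by
  funext x
  simp only [commutatorMul, Pi.zero_apply, hD (b * x), hD x]
  ring

lemma iteratedCommutatorMul_zero (l : List R) : iteratedCommutatorMul (0 : R → R) l = 0 := by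
  induction l with
  | nil => rfl
  | cons b l ih =>
    rw [iteratedCommutatorMul_cons, commutatorMul_eq_zero_of_map_eq_mul (by simp), ih]

lemma iteratedCommutatorMul_eq_mul_of_length {D : R → R} {k : ℕ}
    (H : ∀ l : List R, l.length = k + 1 → iteratedCommutatorMul D l 1 = 0)
    {l : List R} (hl : l.length = k) (x : R) :
    iteratedCommutatorMul D l x = x * iteratedCommutatorMul D l 1 := by
  have h := H (l ++ [x]) (by simp [hl])
  rw [iteratedCommutatorMul_append] at h
  simpa [iteratedCommutatorMul, commutatorMul, sub_eq_zero] using h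

lemma iteratedCommutatorMul_apply_one_eq_zero_of_le {D : R → R} {k : ℕ}
    (H : ∀ l : List R, l.length = k + 1 → iteratedCommutatorMul D l 1 = 0)
    {l : List R} (hl : k + 1 ≤ l.length) : iteratedCommutatorMul D l 1 = 0 := by
  obtain ⟨c, l₂, hc⟩ := List.exists_cons_of_ne_nil (l := l.drop k)
    (by rw [Ne, List.drop_eq_nil_iff]; omega)
  have hmul := iteratedCommutatorMul_eq_mul_of_length H (l := l.take k)
    (by rw [List.length_take]; omega)
  rw [← List.take_append_drop k l, iteratedCommutatorMul_append, hc,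
    iteratedCommutatorMul_cons, commutatorMul_eq_zero_of_map_eq_mul hmul,
    iteratedCommutatorMul_zero, Pi.zero_apply]

end Commutator

section KoszulCommutator

variable {R : Type*} [CommRing R]

noncomputable def koszulSum {ι : Type*} [DecidableEq ι] (D : R → R) (t : Finset ι)
    (a : ι → R) : R :=
  ∑ s ∈ t.powerset, (-1 : ℤ) ^ (#t - #s) • (D (∏ i ∈ s, a i) * ∏ i ∈ t \ s, a i)

lemma koszulSum_insert {ι : Type*} [DecidableEq ι] (D : R → R) {t : Finset ι} {j : ι}
    (hj : j ∉ t) (a : ι → R) :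
    koszulSum D (insert j t) a = koszulSum (commutatorMul D (a j)) t a := by
  unfold koszulSum
  rw [sum_powerset_insert hj, ← sum_add_distrib]
  refine sum_congr rfl fun s hs => ?_
  have hst : s ⊆ t := mem_powerset.mp hs
  have hjs : j ∉ s := fun h => hj (hst h)
  have hjts : j ∉ t \ s := fun h => hj (mem_sdiff.mp h).1
  have hcard : #s ≤ #t := card_le_card hst
  rw [insert_sdiff_of_notMem _ hjs, insert_sdiff_insert, sdiff_insert,
    erase_eq_of_notMem hjts, card_insert_of_notMem hj, card_insert_of_notMem hjs,
    prod_insert hjs, prod_insert hjts, show #t + 1 - #s = #t - #s + 1 by omega,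
    Nat.add_sub_add_right, commutatorMul]
  simp only [zsmul_eq_mul]
  push_cast
  ring

lemma koszulSum_toFinset {ι : Type*} [DecidableEq ι] (a : ι → R) {l : List ι}
    (hl : l.Nodup) (D : R → R) :
    koszulSum D l.toFinset a = iteratedCommutatorMul D (l.map a) 1 := by
  induction l generalizing D with
  | nil => simp [koszulSum, iteratedCommutatorMul]
  | cons j l ih =>
    rw [List.nodup_cons] at hl
    rw [List.toFinset_cons, koszulSum_insert D (by simpa using hl.1), List.map_cons,
      iteratedCommutatorMul_cons, ih hl.2]

lemma koszulSum_univ {n : ℕ} (D : R → R) (a : Fin n → R) :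
    koszulSum D univ a = koszul D n a + (-1 : ℤ) ^ n • (D 1 * ∏ i, a i) := by
  rw [koszulSum, koszul, ← sum_filter_add_sum_filter_not _ (fun s => s.Nonempty), add_comm,
    add_comm (∑ _ ∈ _, _)]
  simp only [not_nonempty_iff_eq_empty, filter_eq', mem_powerset, empty_subset, if_true,
    sum_singleton, card_univ, Fintype.card_fin, card_empty, Nat.sub_zero, prod_empty,
    sdiff_empty, compl_eq_univ_sdiff]

lemma koszul_add_eq_iteratedCommutatorMul {n : ℕ} (D : R → R) (a : Fin n → R) :
    koszul D n a + (-1 : ℤ) ^ n • (D 1 * ∏ i, a i) =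
      iteratedCommutatorMul D (List.ofFn a) 1 := by
  rw [← koszulSum_univ, ← List.toFinset_finRange, List.ofFn_eq_map,
    koszulSum_toFinset a (List.nodup_finRange n)]

lemma map_one_eq_zero_of_koszul_eq_zero {D : R → R} {k : ℕ}
    (H : koszul D (k + 1) (fun _ => 1) = 0) : D 1 = 0 := by
  have h := koszul_add_eq_iteratedCommutatorMul D (fun _ : Fin (k + 1) => (1 : R))
  rw [H, zero_add, List.ofFn_const, List.replicate_succ, iteratedCommutatorMul_cons,
    commutatorMul_one, iteratedCommutatorMul_zero, prod_const_one, mul_one] at h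
  simpa using h

lemma koszul_eq_iteratedCommutatorMul {n : ℕ} {D : R → R} (hD : D 1 = 0) (a : Fin n → R) :
    koszul D n a = iteratedCommutatorMul D (List.ofFn a) 1 := by
  simpa [hD] using koszul_add_eq_iteratedCommutatorMul D a

theorem koszul_eq_zero_of_le {D : R → R} {k n : ℕ}
    (H : ∀ a : Fin (k + 1) → R, koszul D (k + 1) a = 0) (hn : k + 1 ≤ n) (a : Fin n → R) :
    koszul D n a = 0 := by
  have hD := map_one_eq_zero_of_koszul_eq_zero (H _)
  rw [koszul_eq_iteratedCommutatorMul hD]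
  refine iteratedCommutatorMul_apply_one_eq_zero_of_le (fun l hl => ?_) (by simpa using hn)
  rw [← List.ofFn_get l, List.ofFn_congr hl, ← koszul_eq_iteratedCommutatorMul hD, H]

end KoszulCommutator

section PowerSeries

open PowerSeries

variable {A : Type*} [CommRing A]

lemma assocMap_C {B : Type*} [CommRing B] (D : ℕ → A → B) (hD : ∀ j, D j 0 = 0) (b : A) :
    assocMap D (C b) = mk fun p => D p b := by
  ext p
  rw [assocMap, coeff_mk, coeff_mk, sum_eq_single_of_mem p (self_mem_range_succ p)]
  · simp
  · intro j hj hjp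
    rw [coeff_C, if_neg (by rw [mem_range] at hj; omega), hD]

lemma coeff_koszul_assocMap_C (D : ℕ → A → A) (hD : ∀ j, D j 0 = 0) (n : ℕ) (a : Fin n → A)
    (p : ℕ) : coeff p (koszul (assocMap D) n fun i => C (a i)) = koszul (D p) n a := by
  simp only [koszul, map_sum, map_zsmul, ← map_prod, assocMap_C D hD, coeff_mul_C, coeff_mk]

lemma X_pow_dvd_koszul_assocMap_C_iff (D : ℕ → A → A) (hD : ∀ j, D j 0 = 0) (k n : ℕ)
    (a : Fin n → A) :
    X ^ k ∣ koszul (assocMap D) n (fun i => C (a i)) ↔ ∀ p < k, koszul (D p) n a = 0 := by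
  simp only [X_pow_dvd_iff, coeff_koszul_assocMap_C D hD]

end PowerSeries

theorem derivedBV_order_condition_general (K A : Type*) [Field K]
    [CommRing A] [Algebra K A]
    (Δ : ℕ → (A →ₗ[K] A)) :
    (∀ n : ℕ, 2 ≤ n → ∀ a : Fin n → A,
        (PowerSeries.X : PowerSeries A) ^ (n - 1) ∣
          koszul (assocMap fun i => ⇑(Δ i)) n fun i => PowerSeries.C (a i)) ↔
    (∀ m : ℕ, ∀ a : Fin (m + 2) → A, koszul (⇑(Δ m)) (m + 2) a = 0) := by
  have hΔ0 : ∀ j, Δ j 0 = 0 := fun j => map_zero (Δ j)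
  constructor
  · intro h m a
    exact (X_pow_dvd_koszul_assocMap_C_iff _ hΔ0 _ _ a).1 (h (m + 2) (by omega) a) m (by omega)
  · intro h n hn a
    exact (X_pow_dvd_koszul_assocMap_C_iff _ hΔ0 _ _ a).2
      fun p hp => koszul_eq_zero_of_le (h p) (by omega) a

/-- `K(Δ)_n(a_1,…,a_n) ∈ t^{n−1}·A[[t]]` for all `n ≥ 2` and `a_i ∈ A`
if and only if `K(Δ_m)_{m+2} = 0` identically for every `m ≥ 0`, i.e. each `Δ_m` is a
differential operator of order ≤ m+1. -/
theorem derivedBV_order_condition (K A : Type*) [Field K] [CharZero K]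
    [CommRing A] [Algebra K A]
    (Δ : ℕ → (A →ₗ[K] A)) (hΔ1 : ∀ n, Δ n 1 = 0) :
    (∀ n : ℕ, 2 ≤ n → ∀ a : Fin n → A,
        (PowerSeries.X : PowerSeries A) ^ (n - 1) ∣
          koszul (assocMap fun i => ⇑(Δ i)) n fun i => PowerSeries.C (a i)) ↔
    (∀ m : ℕ, ∀ a : Fin (m + 2) → A, koszul (⇑(Δ m)) (m + 2) a = 0) :=
  derivedBV_order_condition_general K A Δ
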